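/- arXiv:1506.05618 — 7 statements merged into one kernel-verified Lean document; each statement's English description precedes it below -/
import Mathlib

section
/- Let x₀, y₀ ∈ ℝ and let u, p : [x₀,∞) × [y₀,∞) → [0,∞) be continuous. Let k ≥ 0 be a constant. If u(x,y) ≤ k + ∫_{x₀}^{x} ∫_{x₀}^{s} ∫_{y₀}^{y} p(η,τ) u(η,τ) dτ dη ds for all x ≥ x₀ and y ≥ y₀, then u(x,y) ≤ k · exp( ∫_{x₀}^{x} ∫_{x₀}^{s} ∫_{y₀}^{y} p(η,τ) dτ dη ds ) for all x ≥ x₀ and y ≥ y₀. -/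
/-!
Fix `y`. The function `v x := k + ∫∫∫ p u` (the right-hand side of the hypothesis at `(x, y)`)
is nondecreasing in both variables, so `u η τ ≤ v s` whenever `η ≤ s` and `τ ≤ y`. Pulling
`v s` out of the two inner integrals gives `v x ≤ k + ∫_{x₀}^x Q(s) v(s) ds` with
`Q(s) = ∫_{x₀}^s ∫_{y₀}^y p`, and the one-variable Gronwall inequality bounds `v x`, hence
`u x y`, by `k exp (∫_{x₀}^x Q)`. The hypotheses only concern the quadrant
`[x₀, ∞) × [y₀, ∞)`; precomposing with `(a, b) ↦ (max a x₀, max b y₀)` reduces to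
functions that are continuous and nonnegative on all of `ℝ²`.
-/

open MeasureTheory Set intervalIntegral Function

theorem le_mul_exp_integral_of_le_add_integral_mul {a k : ℝ} {f q : ℝ → ℝ}
    (hf : Continuous f) (hq : Continuous q) (hq0 : ∀ x, a ≤ x → 0 ≤ q x)
    (h : ∀ x, a ≤ x → f x ≤ k + ∫ s in a..x, q s * f s) {x : ℝ} (hx : a ≤ x) :
    f x ≤ k * Real.exp (∫ s in a..x, q s) := by
  set H : ℝ → ℝ := fun t => k + ∫ s in a..t, q s * f s
  set R : ℝ → ℝ := fun t => ∫ s in a..t, q s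
  have hH : ∀ t, HasDerivAt H (q t * f t) t := fun t =>
    ((hq.mul hf).integral_hasStrictDerivAt a t).hasDerivAt.const_add k
  have hR : ∀ t, HasDerivAt R (q t) t := fun t => (hq.integral_hasStrictDerivAt a t).hasDerivAt
  -- `H e^{-R}` has derivative `q e^{-R} (f - H) ≤ 0` on `[a, ∞)`.
  have hanti : AntitoneOn (fun t => H t * Real.exp (-R t)) (Ici a) := by
    refine antitoneOn_of_hasDerivWithinAt_nonpos (convex_Ici a)
      (fun t _ => ((hH t).mul (hR t).neg.exp).continuousAt.continuousWithinAt)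
      (fun t _ => ((hH t).mul (hR t).neg.exp).hasDerivWithinAt) fun t ht => ?_
    rw [interior_Ici] at ht
    have hfH : f t ≤ H t := h t ht.le
    rw [Pi.neg_apply]
    linarith [mul_nonneg (mul_nonneg (hq0 t ht.le) (Real.exp_pos (-R t)).le) (sub_nonneg.2 hfH)]
  have hFx : H x * Real.exp (-R x) ≤ k := by
    simpa [H, R] using hanti self_mem_Ici hx hx
  calc f x ≤ H x := h x hx
    _ = H x * Real.exp (-R x) * Real.exp (R x) := by
      rw [mul_assoc, ← Real.exp_add, neg_add_cancel, Real.exp_zero, mul_one]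
    _ ≤ k * Real.exp (R x) := mul_le_mul_of_nonneg_right hFx (Real.exp_pos _).le

section IteratedIntegrals

variable {f g : ℝ → ℝ → ℝ}

theorem continuous_integral_integral (hf : Continuous (uncurry f)) (a c d : ℝ) :
    Continuous fun s => ∫ η in a..s, ∫ τ in c..d, f η τ :=
  continuous_primitive
    (fun _ _ => (continuous_parametric_intervalIntegral_of_continuous' hf c d).intervalIntegrable _ _) a

theorem integral_integral_mono_on {a b c d : ℝ} (hab : a ≤ b) (hcd : c ≤ d)
    (hf : Continuous (uncurry f)) (hg : Continuous (uncurry g))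
    (h : ∀ η ∈ Icc a b, ∀ τ ∈ Icc c d, f η τ ≤ g η τ) :
    ∫ η in a..b, ∫ τ in c..d, f η τ ≤ ∫ η in a..b, ∫ τ in c..d, g η τ :=
  integral_mono_on hab
    ((continuous_parametric_intervalIntegral_of_continuous' hf c d).intervalIntegrable _ _)
    ((continuous_parametric_intervalIntegral_of_continuous' hg c d).intervalIntegrable _ _)
    fun η hη => integral_mono_on hcd ((hf.uncurry_left η).intervalIntegrable _ _)
      ((hg.uncurry_left η).intervalIntegrable _ _) (h η hη)

theorem integral_integral_mono_upper {a b c d d' : ℝ} (hab : a ≤ b) (hcd : c ≤ d) (hdd' : d ≤ d')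
    (hf : Continuous (uncurry f)) (hf0 : ∀ η τ, 0 ≤ f η τ) :
    ∫ η in a..b, ∫ τ in c..d, f η τ ≤ ∫ η in a..b, ∫ τ in c..d', f η τ :=
  integral_mono_on hab
    ((continuous_parametric_intervalIntegral_of_continuous' hf c d).intervalIntegrable _ _)
    ((continuous_parametric_intervalIntegral_of_continuous' hf c d').intervalIntegrable _ _)
    fun η _ => integral_mono_interval le_rfl hcd hdd' (Filter.Eventually.of_forall (hf0 η))
      ((hf.uncurry_left η).intervalIntegrable _ _)

noncomputable def tripleIntegral (x₀ y₀ : ℝ) (f : ℝ → ℝ → ℝ) (x y : ℝ) : ℝ :=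
  ∫ s in x₀..x, ∫ η in x₀..s, ∫ τ in y₀..y, f η τ

variable {x₀ y₀ : ℝ}

theorem continuous_tripleIntegral (hf : Continuous (uncurry f)) (y : ℝ) :
    Continuous fun x => tripleIntegral x₀ y₀ f x y :=
  continuous_primitive (fun _ _ => (continuous_integral_integral hf x₀ y₀ y).intervalIntegrable _ _) x₀

theorem integral_integral_nonneg (hf0 : ∀ η τ, 0 ≤ f η τ) {s y : ℝ} (hs : x₀ ≤ s) (hy : y₀ ≤ y) :
    0 ≤ ∫ η in x₀..s, ∫ τ in y₀..y, f η τ :=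
  integral_nonneg hs fun η _ => integral_nonneg hy fun τ _ => hf0 η τ

theorem monotoneOn_tripleIntegral (hf : Continuous (uncurry f)) (hf0 : ∀ η τ, 0 ≤ f η τ)
    {y : ℝ} (hy : y₀ ≤ y) : MonotoneOn (fun x => tripleIntegral x₀ y₀ f x y) (Ici x₀) :=
  fun _ hs _ _ hst => integral_mono_interval le_rfl hs hst
    (ae_restrict_of_forall_mem measurableSet_Ioc fun _ hr =>
      integral_integral_nonneg hf0 hr.1.le hy)
    ((continuous_integral_integral hf x₀ y₀ y).intervalIntegrable _ _)

theorem tripleIntegral_mono_right (hf : Continuous (uncurry f)) (hf0 : ∀ η τ, 0 ≤ f η τ)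
    {x y y' : ℝ} (hx : x₀ ≤ x) (hy : y₀ ≤ y) (hyy' : y ≤ y') :
    tripleIntegral x₀ y₀ f x y ≤ tripleIntegral x₀ y₀ f x y' :=
  integral_mono_on hx ((continuous_integral_integral hf x₀ y₀ y).intervalIntegrable _ _)
    ((continuous_integral_integral hf x₀ y₀ y').intervalIntegrable _ _)
    fun _ hs => integral_integral_mono_upper hs.1 hy hyy' hf hf0

theorem tripleIntegral_congr (hfg : ∀ a b, x₀ ≤ a → y₀ ≤ b → f a b = g a b)
    {x y : ℝ} (hx : x₀ ≤ x) (hy : y₀ ≤ y) :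
    tripleIntegral x₀ y₀ f x y = tripleIntegral x₀ y₀ g x y := by
  refine integral_congr fun s hs => ?_
  rw [uIcc_of_le hx] at hs
  refine integral_congr fun η hη => ?_
  rw [uIcc_of_le hs.1] at hη
  refine integral_congr fun τ hτ => ?_
  rw [uIcc_of_le hy] at hτ
  exact hfg η τ hη.1 hτ.1

end IteratedIntegrals

theorem le_mul_exp_tripleIntegral {x₀ y₀ k : ℝ} {u p : ℝ → ℝ → ℝ}
    (hu : Continuous (uncurry u)) (hp : Continuous (uncurry p))
    (hu0 : ∀ x y, 0 ≤ u x y) (hp0 : ∀ x y, 0 ≤ p x y)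
    (hineq : ∀ x y, x₀ ≤ x → y₀ ≤ y →
      u x y ≤ k + tripleIntegral x₀ y₀ (fun η τ => p η τ * u η τ) x y)
    {x y : ℝ} (hx : x₀ ≤ x) (hy : y₀ ≤ y) :
    u x y ≤ k * Real.exp (tripleIntegral x₀ y₀ p x y) := by
  have hpu : Continuous (uncurry fun η τ => p η τ * u η τ) := hp.mul hu
  have hpu0 : ∀ η τ, 0 ≤ p η τ * u η τ := fun η τ => mul_nonneg (hp0 η τ) (hu0 η τ)
  set v : ℝ → ℝ := fun s => k + tripleIntegral x₀ y₀ (fun η τ => p η τ * u η τ) s y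
  set Q : ℝ → ℝ := fun s => ∫ η in x₀..s, ∫ τ in y₀..y, p η τ
  have hv : Continuous v := (continuous_tripleIntegral hpu y).const_add k
  have hu_le_v : ∀ s, x₀ ≤ s → ∀ η ∈ Icc x₀ s, ∀ τ ∈ Icc y₀ y, u η τ ≤ v s := fun s hs η hη τ hτ =>
    calc u η τ ≤ k + tripleIntegral x₀ y₀ (fun η τ => p η τ * u η τ) η τ := hineq η τ hη.1 hτ.1
      _ ≤ v η := add_le_add le_rfl (tripleIntegral_mono_right hpu hpu0 hη.1 hτ.1 hτ.2)
      _ ≤ v s := add_le_add le_rfl (monotoneOn_tripleIntegral hpu hpu0 hy hη.1 hs hη.2)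
  have hinner : ∀ s, x₀ ≤ s → ∫ η in x₀..s, ∫ τ in y₀..y, p η τ * u η τ ≤ Q s * v s :=
    fun s hs => by
      have := integral_integral_mono_on (g := fun η τ => p η τ * v s) hs hy hpu
        (hp.mul continuous_const)
        fun η hη τ hτ => mul_le_mul_of_nonneg_left (hu_le_v s hs η hη τ hτ) (hp0 η τ)
      simpa only [intervalIntegral.integral_mul_const] using this
  refine (hu_le_v x hx x ⟨hx, le_rfl⟩ y ⟨hy, le_rfl⟩).trans <|
    le_mul_exp_integral_of_le_add_integral_mul hv (continuous_integral_integral hp x₀ y₀ y)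
      (fun s hs => integral_integral_nonneg hp0 hs hy) (fun t ht => ?_) hx
  exact add_le_add le_rfl <| integral_mono_on ht
    ((continuous_integral_integral hpu x₀ y₀ y).intervalIntegrable _ _)
    (((continuous_integral_integral hp x₀ y₀ y).mul hv).intervalIntegrable _ _)
    fun s hs => hinner s hs.1

section QuadrantExtension

def quadrantExtend (x₀ y₀ : ℝ) (f : ℝ → ℝ → ℝ) (a b : ℝ) : ℝ := f (max a x₀) (max b y₀)

variable {x₀ y₀ : ℝ} {f : ℝ → ℝ → ℝ}

theorem quadrantExtend_of_le {a b : ℝ} (ha : x₀ ≤ a) (hb : y₀ ≤ b) :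
    quadrantExtend x₀ y₀ f a b = f a b := by
  rw [quadrantExtend, max_eq_left ha, max_eq_left hb]

theorem continuous_quadrantExtend
    (hf : ContinuousOn (fun z : ℝ × ℝ => f z.1 z.2) (Ici x₀ ×ˢ Ici y₀)) :
    Continuous (uncurry (quadrantExtend x₀ y₀ f)) :=
  hf.comp_continuous ((continuous_fst.max continuous_const).prodMk
    (continuous_snd.max continuous_const)) fun z => ⟨le_max_right z.1 x₀, le_max_right z.2 y₀⟩

theorem quadrantExtend_nonneg (hf0 : ∀ x y, x₀ ≤ x → y₀ ≤ y → 0 ≤ f x y) (a b : ℝ) :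
    0 ≤ quadrantExtend x₀ y₀ f a b :=
  hf0 _ _ (le_max_right a x₀) (le_max_right b y₀)

end QuadrantExtension

theorem stmt_0_general (x₀ y₀ : ℝ) (u p : ℝ → ℝ → ℝ) (k : ℝ)
    (hu_cont : ContinuousOn (fun z : ℝ × ℝ => u z.1 z.2) (Set.Ici x₀ ×ˢ Set.Ici y₀))
    (hp_cont : ContinuousOn (fun z : ℝ × ℝ => p z.1 z.2) (Set.Ici x₀ ×ˢ Set.Ici y₀))
    (hu_nonneg : ∀ x y, x₀ ≤ x → y₀ ≤ y → 0 ≤ u x y)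
    (hp_nonneg : ∀ x y, x₀ ≤ x → y₀ ≤ y → 0 ≤ p x y)
    (hineq : ∀ x y, x₀ ≤ x → y₀ ≤ y →
      u x y ≤ k + ∫ s in x₀..x, ∫ η in x₀..s, ∫ τ in y₀..y, p η τ * u η τ) :
    ∀ x y, x₀ ≤ x → y₀ ≤ y →
      u x y ≤ k * Real.exp (∫ s in x₀..x, ∫ η in x₀..s, ∫ τ in y₀..y, p η τ) := by
  intro x y hx hy
  have hPU : ∀ a b, x₀ ≤ a → y₀ ≤ b →
      quadrantExtend x₀ y₀ p a b * quadrantExtend x₀ y₀ u a b = p a b * u a b :=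
    fun a b ha hb => by rw [quadrantExtend_of_le ha hb, quadrantExtend_of_le ha hb]
  have hbound := le_mul_exp_tripleIntegral (continuous_quadrantExtend hu_cont)
    (continuous_quadrantExtend hp_cont) (quadrantExtend_nonneg hu_nonneg)
    (quadrantExtend_nonneg hp_nonneg) (fun a b ha hb => by
      rw [tripleIntegral_congr hPU ha hb, quadrantExtend_of_le ha hb]
      exact hineq a b ha hb) hx hy
  rwa [quadrantExtend_of_le hx hy,
    tripleIntegral_congr (fun a b ha hb => quadrantExtend_of_le ha hb) hx hy] at hbound

/-- Continuous (𝕋₁ = 𝕋₂ = ℝ) case of Theorem 2.1: a two-variable Gronwall-type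
inequality with an iterated triple integral. -/
theorem stmt_0 (x₀ y₀ : ℝ) (u p : ℝ → ℝ → ℝ) (k : ℝ)
    (hu_cont : ContinuousOn (fun z : ℝ × ℝ => u z.1 z.2) (Set.Ici x₀ ×ˢ Set.Ici y₀))
    (hp_cont : ContinuousOn (fun z : ℝ × ℝ => p z.1 z.2) (Set.Ici x₀ ×ˢ Set.Ici y₀))
    (hu_nonneg : ∀ x y, x₀ ≤ x → y₀ ≤ y → 0 ≤ u x y)
    (hp_nonneg : ∀ x y, x₀ ≤ x → y₀ ≤ y → 0 ≤ p x y)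
    (hk : 0 ≤ k)
    (hineq : ∀ x y, x₀ ≤ x → y₀ ≤ y →
      u x y ≤ k + ∫ s in x₀..x, ∫ η in x₀..s, ∫ τ in y₀..y, p η τ * u η τ) :
    ∀ x y, x₀ ≤ x → y₀ ≤ y →
      u x y ≤ k * Real.exp (∫ s in x₀..x, ∫ η in x₀..s, ∫ τ in y₀..y, p η τ) :=
  stmt_0_general x₀ y₀ u p k hu_cont hp_cont hu_nonneg hp_nonneg hineq
end

section
/- Let x₀, y₀ ∈ ℕ and let u, p : ℕ × ℕ → [0,∞). Let k ≥ 0 be a constant. If u(x,y) ≤ k + Σ_{s=x₀}^{x−1} Σ_{η=x₀}^{s−1} Σ_{τ=y₀}^{y−1} p(η,τ) u(η,τ) for all x ≥ x₀ and y ≥ y₀, then u(x,y) ≤ k · ∏_{s=x₀}^{x−1} ( 1 + Σ_{η=x₀}^{s−1} Σ_{τ=y₀}^{y−1} p(η,τ) ) for all x ≥ x₀ and y ≥ y₀. -/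
/-!
Fix `y` and let `R n = k + ∑_{s<n} ∑_{η<s} ∑_{τ<y} p u` be the right-hand side of the hypothesis
at `(n, y)`. Since `p u ≥ 0`, the right-hand side is monotone in both variables, so every
`u η τ` with `η < n`, `τ < y` is bounded by `R n`. Hence the increment `R (n + 1) - R n` is at
most `(∑_{η<n} ∑_{τ<y} p) · R n`, and the product bound follows from the discrete Gronwall
inequality `r (n + 1) ≤ c n · r n ⟹ r n ≤ r a · ∏ c`.
-/

open Finset

theorem le_mul_prod_Ico_of_le_mul {R : Type*} [CommSemiring R] [PartialOrder R]
    [IsOrderedRing R] {r c : ℕ → R} {a : ℕ} (hc : ∀ n, a ≤ n → 0 ≤ c n)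
    (hr : ∀ n, a ≤ n → r (n + 1) ≤ c n * r n) :
    ∀ n, a ≤ n → r n ≤ r a * ∏ s ∈ Ico a n, c s := by
  intro n hn
  induction n, hn using Nat.le_induction with
  | base => simp
  | succ n hn ih =>
    calc r (n + 1) ≤ c n * r n := hr n hn
      _ ≤ c n * (r a * ∏ s ∈ Ico a n, c s) := mul_le_mul_of_nonneg_left ih (hc n hn)
      _ = r a * ∏ s ∈ Ico a (n + 1), c s := by rw [prod_Ico_succ_top hn]; ring

section RectSum

variable {R : Type*} [CommSemiring R] [PartialOrder R] [IsOrderedRing R]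

def rectSum (a b : ℕ) (f : ℕ → ℕ → R) (x y : ℕ) : R :=
  ∑ i ∈ Ico a x, ∑ j ∈ Ico b y, f i j

theorem rectSum_nonneg {a b : ℕ} {f : ℕ → ℕ → R} (hf : ∀ i j, 0 ≤ f i j) (x y : ℕ) :
    0 ≤ rectSum a b f x y :=
  sum_nonneg fun _ _ => sum_nonneg fun _ _ => hf _ _

theorem rectSum_mono {a b : ℕ} {f : ℕ → ℕ → R} (hf : ∀ i j, 0 ≤ f i j) {x x' y y' : ℕ}
    (hx : x ≤ x') (hy : y ≤ y') : rectSum a b f x y ≤ rectSum a b f x' y' := by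
  simp only [rectSum, ← sum_product']
  exact sum_le_sum_of_subset_of_nonneg
    (product_subset_product (Ico_subset_Ico_right hx) (Ico_subset_Ico_right hy))
    fun _ _ _ => hf _ _

theorem sum_rectSum_mono {a b : ℕ} {f : ℕ → ℕ → R} (hf : ∀ i j, 0 ≤ f i j) {x x' y y' : ℕ}
    (hx : x ≤ x') (hy : y ≤ y') :
    ∑ s ∈ Ico a x, rectSum a b f s y ≤ ∑ s ∈ Ico a x', rectSum a b f s y' :=
  calc ∑ s ∈ Ico a x, rectSum a b f s y ≤ ∑ s ∈ Ico a x, rectSum a b f s y' :=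
        sum_le_sum fun _ _ => rectSum_mono hf le_rfl hy
    _ ≤ ∑ s ∈ Ico a x', rectSum a b f s y' :=
        sum_le_sum_of_subset_of_nonneg (Ico_subset_Ico_right hx) fun _ _ _ =>
          rectSum_nonneg hf _ _

theorem rectSum_mul_le {a b x y : ℕ} {f g : ℕ → ℕ → R} {M : R} (hf : ∀ i j, 0 ≤ f i j)
    (hg : ∀ i ∈ Ico a x, ∀ j ∈ Ico b y, g i j ≤ M) :
    rectSum a b (fun i j => f i j * g i j) x y ≤ rectSum a b f x y * M := by
  simp only [rectSum, sum_mul]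
  refine sum_le_sum fun i hi => sum_le_sum fun j hj => ?_
  exact mul_le_mul_of_nonneg_left (hg i hi j hj) (hf i j)

end RectSum

theorem stmt_1_general (x₀ y₀ : ℕ) (u p : ℕ → ℕ → ℝ) (k : ℝ)
    (hu_nonneg : ∀ x y, 0 ≤ u x y)
    (hp_nonneg : ∀ x y, 0 ≤ p x y)
    (hineq : ∀ x y, x₀ ≤ x → y₀ ≤ y →
      u x y ≤ k + ∑ s ∈ Finset.Ico x₀ x, ∑ η ∈ Finset.Ico x₀ s,
        ∑ τ ∈ Finset.Ico y₀ y, p η τ * u η τ) :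
    ∀ x y, x₀ ≤ x → y₀ ≤ y →
      u x y ≤ k * ∏ s ∈ Finset.Ico x₀ x,
        (1 + ∑ η ∈ Finset.Ico x₀ s, ∑ τ ∈ Finset.Ico y₀ y, p η τ) := by
  intro x y hx hy
  have hpu : ∀ i j, 0 ≤ p i j * u i j := fun i j => mul_nonneg (hp_nonneg i j) (hu_nonneg i j)
  let r n := k + ∑ s ∈ Ico x₀ n, rectSum x₀ y₀ (fun i j => p i j * u i j) s y
  have hstep : ∀ n, x₀ ≤ n → r (n + 1) ≤ (1 + rectSum x₀ y₀ p n y) * r n := by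
    intro n hn
    have hinc : rectSum x₀ y₀ (fun i j => p i j * u i j) n y ≤ rectSum x₀ y₀ p n y * r n :=
      rectSum_mul_le hp_nonneg fun i hi j hj =>
        (hineq i j (mem_Ico.1 hi).1 (mem_Ico.1 hj).1).trans <|
          add_le_add_right (sum_rectSum_mono hpu (mem_Ico.1 hi).2.le (mem_Ico.1 hj).2.le) k
    simp only [r, sum_Ico_succ_top hn]
    linarith
  calc u x y ≤ r x := hineq x y hx hy
    _ ≤ r x₀ * ∏ s ∈ Ico x₀ x, (1 + rectSum x₀ y₀ p s y) :=
      le_mul_prod_Ico_of_le_mul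
        (fun n _ => add_nonneg zero_le_one (rectSum_nonneg hp_nonneg n y))
        hstep x hx
    _ = _ := by simp [r, rectSum]

/-- Discrete (𝕋₁ = 𝕋₂ = ℤ) case of Theorem 2.1: a two-variable Gronwall-type
inequality with an iterated triple sum. -/
theorem stmt_1 (x₀ y₀ : ℕ) (u p : ℕ → ℕ → ℝ) (k : ℝ)
    (hu_nonneg : ∀ x y, 0 ≤ u x y)
    (hp_nonneg : ∀ x y, 0 ≤ p x y)
    (hk : 0 ≤ k)
    (hineq : ∀ x y, x₀ ≤ x → y₀ ≤ y →
      u x y ≤ k + ∑ s ∈ Finset.Ico x₀ x, ∑ η ∈ Finset.Ico x₀ s,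
        ∑ τ ∈ Finset.Ico y₀ y, p η τ * u η τ) :
    ∀ x y, x₀ ≤ x → y₀ ≤ y →
      u x y ≤ k * ∏ s ∈ Finset.Ico x₀ x,
        (1 + ∑ η ∈ Finset.Ico x₀ s, ∑ τ ∈ Finset.Ico y₀ y, p η τ) :=
  stmt_1_general x₀ y₀ u p k hu_nonneg hp_nonneg hineq
end

section
/- Let x₀, y₀ ∈ ℝ and let u, p, q : [x₀,∞) × [y₀,∞) → ℝ be continuous with u, p nonnegative, q(x,y) > 0 for all (x,y), and q nondecreasing in each of its two variables. If u(x,y) ≤ q(x,y) + ∫_{x₀}^{x} ∫_{x₀}^{s} ∫_{y₀}^{y} p(η,τ) u(η,τ) dτ dη ds for all x ≥ x₀ and y ≥ y₀, then u(x,y) ≤ q(x,y) · exp( ∫_{x₀}^{x} ∫_{x₀}^{s} ∫_{y₀}^{y} p(η,τ) dτ dη ds ) for all x ≥ x₀ and y ≥ y₀. -/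
/-!
Fix the corner `(X, Y)`. Since `q` is nondecreasing, `q x y ≤ q X Y` on the rectangle, so it
suffices to treat a constant forcing term `c = q X Y`. As `u ≥ 0`, the inner integral is largest
at `y = Y`, so `u x y ≤ a x := c + ∫∫ f` with `f η = ∫_{y₀}^{Y} p η τ * u η τ`, and hence
`f ≤ P * a` with `P η = ∫_{y₀}^{Y} p η τ`. Since `a` is nondecreasing, `a' = ∫ f ≤ a * ∫ P`,
which makes `a * exp (-∫∫ P)` nonincreasing.
-/

open Set Real Function intervalIntegral

theorem le_mul_exp_of_hasDerivAt_le_mul {a a' G g : ℝ → ℝ} {x₀ X : ℝ} (hX : x₀ ≤ X)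
    (ha : ∀ x, HasDerivAt a (a' x) x) (hG : ∀ x, HasDerivAt G (g x) x)
    (hle : ∀ x ∈ Ioo x₀ X, a' x ≤ a x * g x) :
    a X ≤ a x₀ * exp (G X - G x₀) := by
  set φ := fun x => a x * exp (-G x)
  have hφ : ∀ x, HasDerivAt φ ((a' x - a x * g x) * exp (-G x)) x := fun x =>
    ((ha x).mul (hG x).fun_neg.exp).congr_deriv (by ring)
  have hanti : AntitoneOn φ (Icc x₀ X) := by
    refine antitoneOn_of_deriv_nonpos (convex_Icc x₀ X)
      (HasDerivAt.continuousOn fun x _ => hφ x)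
      (fun x _ => (hφ x).differentiableAt.differentiableWithinAt) fun x hx => ?_
    rw [interior_Icc] at hx
    rw [(hφ x).deriv]
    exact mul_nonpos_of_nonpos_of_nonneg (sub_nonpos.2 (hle x hx)) (exp_pos _).le
  calc a X = φ X * exp (G X) := by
        simp only [φ, mul_assoc, ← exp_add, neg_add_cancel, exp_zero, mul_one]
    _ ≤ φ x₀ * exp (G X) :=
      mul_le_mul_of_nonneg_right (hanti (left_mem_Icc.2 hX) (right_mem_Icc.2 hX) hX) (exp_pos _).le
    _ = a x₀ * exp (G X - G x₀) := by rw [mul_assoc, ← exp_add, neg_add_eq_sub]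

theorem add_integral_integral_le_mul_exp {f P : ℝ → ℝ} {x₀ X : ℝ} (c : ℝ) (hX : x₀ ≤ X)
    (hf : Continuous f) (hP : Continuous P)
    (hf0 : ∀ x ∈ Icc x₀ X, 0 ≤ f x) (hP0 : ∀ x ∈ Icc x₀ X, 0 ≤ P x)
    (hfP : ∀ x ∈ Icc x₀ X, f x ≤ P x * (c + ∫ s in x₀..x, ∫ η in x₀..s, f η)) :
    c + ∫ s in x₀..X, ∫ η in x₀..s, f η ≤ c * exp (∫ s in x₀..X, ∫ η in x₀..s, P η) := by
  set A := fun x => ∫ η in x₀..x, f η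
  set a := fun x => c + ∫ s in x₀..x, A s
  set B := fun x => ∫ η in x₀..x, P η
  have ha : ∀ x, HasDerivAt a (A x) x := fun x =>
    ((Continuous.integral_hasStrictDerivAt (by fun_prop) x₀ x).hasDerivAt).const_add c
  have hG : ∀ x, HasDerivAt (fun x => ∫ s in x₀..x, B s) (B x) x := fun x =>
    (Continuous.integral_hasStrictDerivAt (by fun_prop) x₀ x).hasDerivAt
  have ha_mono : MonotoneOn a (Icc x₀ X) := by
    refine monotoneOn_of_deriv_nonneg (convex_Icc x₀ X)
      (HasDerivAt.continuousOn fun x _ => ha x)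
      (fun x _ => (ha x).differentiableAt.differentiableWithinAt) fun x hx => ?_
    rw [interior_Icc] at hx
    rw [(ha x).deriv]
    exact integral_nonneg hx.1.le fun η hη => hf0 η ⟨hη.1, hη.2.trans hx.2.le⟩
  have hAaB : ∀ x ∈ Ioo x₀ X, A x ≤ a x * B x := fun x hx => by
    have hxX : x ∈ Icc x₀ X := Ioo_subset_Icc_self hx
    calc A x ≤ ∫ η in x₀..x, a x * P η := by
          refine integral_mono_on hx.1.le (hf.intervalIntegrable _ _)
            ((by fun_prop : Continuous fun η => a x * P η).intervalIntegrable _ _) fun η hη => ?_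
          have hηX : η ∈ Icc x₀ X := ⟨hη.1, hη.2.trans hxX.2⟩
          calc f η ≤ P η * a η := hfP η hηX
            _ ≤ a x * P η := by
              rw [mul_comm]
              exact mul_le_mul_of_nonneg_right (ha_mono hηX hxX hη.2) (hP0 η hηX)
      _ = a x * B x := integral_const_mul _ _
  simpa only [a, integral_same, add_zero, sub_zero] using
    le_mul_exp_of_hasDerivAt_le_mul hX ha hG hAaB

theorem le_mul_exp_integral_integral_integral {u p : ℝ → ℝ → ℝ} {x₀ y₀ X Y : ℝ} (c : ℝ)
    (hX : x₀ ≤ X) (hY : y₀ ≤ Y) (hu : Continuous (uncurry u)) (hp : Continuous (uncurry p))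
    (hu0 : ∀ x ∈ Icc x₀ X, ∀ y ∈ Icc y₀ Y, 0 ≤ u x y)
    (hp0 : ∀ x ∈ Icc x₀ X, ∀ y ∈ Icc y₀ Y, 0 ≤ p x y)
    (h : ∀ x ∈ Icc x₀ X, ∀ y ∈ Icc y₀ Y,
      u x y ≤ c + ∫ s in x₀..x, ∫ η in x₀..s, ∫ τ in y₀..y, p η τ * u η τ) :
    u X Y ≤ c * exp (∫ s in x₀..X, ∫ η in x₀..s, ∫ τ in y₀..Y, p η τ) := by
  have hpu : Continuous (uncurry fun η τ => p η τ * u η τ) := hp.mul hu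
  set f := fun η => ∫ τ in y₀..Y, p η τ * u η τ
  set a := fun x => c + ∫ s in x₀..x, ∫ η in x₀..s, f η
  have hf0 : ∀ η ∈ Icc x₀ X, 0 ≤ f η := fun η hη =>
    integral_nonneg hY fun τ hτ => mul_nonneg (hp0 η hη τ hτ) (hu0 η hη τ hτ)
  have hu_le : ∀ x ∈ Icc x₀ X, ∀ y ∈ Icc y₀ Y, u x y ≤ a x := by
    intro x hx y hy
    refine (h x hx y hy).trans ((add_le_add_iff_left c).2 ?_)
    refine integral_mono_on hx.1 (Continuous.intervalIntegrable (by fun_prop) _ _)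
      (Continuous.intervalIntegrable (by fun_prop) _ _) fun s hs => ?_
    refine integral_mono_on hs.1 (Continuous.intervalIntegrable (by fun_prop) _ _)
      (Continuous.intervalIntegrable (by fun_prop) _ _) fun η hη => ?_
    have hηX : η ∈ Icc x₀ X := ⟨hη.1, hη.2.trans (hs.2.trans hx.2)⟩
    refine integral_mono_interval le_rfl hy.1 hy.2 ?_
      (Continuous.intervalIntegrable (by fun_prop) _ _)
    filter_upwards [MeasureTheory.ae_restrict_mem measurableSet_Ioc] with τ hτ
    exact mul_nonneg (hp0 η hηX τ (Ioc_subset_Icc_self hτ)) (hu0 η hηX τ (Ioc_subset_Icc_self hτ))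
  have hfP : ∀ η ∈ Icc x₀ X, f η ≤ (∫ τ in y₀..Y, p η τ) * a η := by
    intro η hη
    rw [← integral_mul_const]
    refine integral_mono_on hY (Continuous.intervalIntegrable (by fun_prop) _ _)
      (Continuous.intervalIntegrable (by fun_prop) _ _) fun τ hτ => ?_
    exact mul_le_mul_of_nonneg_left (hu_le η hη τ hτ) (hp0 η hη τ hτ)
  exact (hu_le X ⟨hX, le_rfl⟩ Y ⟨hY, le_rfl⟩).trans
    (add_integral_integral_le_mul_exp c hX (by fun_prop) (by fun_prop) hf0
      (fun η hη => integral_nonneg hY fun τ hτ => hp0 η hη τ hτ) hfP)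

theorem continuous_uncurry_max_of_continuousOn {u : ℝ → ℝ → ℝ} {x₀ y₀ : ℝ}
    (hu : ContinuousOn (uncurry u) (Ici x₀ ×ˢ Ici y₀)) :
    Continuous (uncurry fun x y => u (max x₀ x) (max y₀ y)) :=
  hu.comp_continuous (f := fun z : ℝ × ℝ => (max x₀ z.1, max y₀ z.2)) (by fun_prop)
    fun z => ⟨le_max_left x₀ z.1, le_max_left y₀ z.2⟩

theorem integral_integral_integral_congr {v w : ℝ → ℝ → ℝ} {x₀ y₀ x y : ℝ}
    (hx : x₀ ≤ x) (hy : y₀ ≤ y) (h : ∀ η τ, x₀ ≤ η → y₀ ≤ τ → v η τ = w η τ) :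
    ∫ s in x₀..x, ∫ η in x₀..s, ∫ τ in y₀..y, v η τ =
      ∫ s in x₀..x, ∫ η in x₀..s, ∫ τ in y₀..y, w η τ := by
  refine integral_congr fun s hs => integral_congr fun η hη => integral_congr fun τ hτ => ?_
  rw [uIcc_of_le hx] at hs
  rw [uIcc_of_le hs.1] at hη
  rw [uIcc_of_le hy] at hτ
  exact h η τ hη.1 hτ.1

theorem le_mul_exp_integral_integral_integral_of_continuousOn {u p : ℝ → ℝ → ℝ}
    {x₀ y₀ X Y : ℝ} (c : ℝ) (hX : x₀ ≤ X) (hY : y₀ ≤ Y)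
    (hu : ContinuousOn (uncurry u) (Ici x₀ ×ˢ Ici y₀))
    (hp : ContinuousOn (uncurry p) (Ici x₀ ×ˢ Ici y₀))
    (hu0 : ∀ x ∈ Icc x₀ X, ∀ y ∈ Icc y₀ Y, 0 ≤ u x y)
    (hp0 : ∀ x ∈ Icc x₀ X, ∀ y ∈ Icc y₀ Y, 0 ≤ p x y)
    (h : ∀ x ∈ Icc x₀ X, ∀ y ∈ Icc y₀ Y,
      u x y ≤ c + ∫ s in x₀..x, ∫ η in x₀..s, ∫ τ in y₀..y, p η τ * u η τ) :
    u X Y ≤ c * exp (∫ s in x₀..X, ∫ η in x₀..s, ∫ τ in y₀..Y, p η τ) := by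
  have := le_mul_exp_integral_integral_integral c hX hY
    (continuous_uncurry_max_of_continuousOn hu) (continuous_uncurry_max_of_continuousOn hp)
    (fun x hx y hy => by simpa only [max_eq_right hx.1, max_eq_right hy.1] using hu0 x hx y hy)
    (fun x hx y hy => by simpa only [max_eq_right hx.1, max_eq_right hy.1] using hp0 x hx y hy)
    fun x hx y hy => by
      rw [max_eq_right hx.1, max_eq_right hy.1, integral_integral_integral_congr hx.1 hy.1
        fun η τ hη hτ => by rw [max_eq_right hη, max_eq_right hτ]]
      exact h x hx y hy
  rwa [max_eq_right hX, max_eq_right hY, integral_integral_integral_congr hX hY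
    fun η τ hη hτ => by rw [max_eq_right hη, max_eq_right hτ]] at this

theorem stmt_2_general (x₀ y₀ : ℝ) (u p q : ℝ → ℝ → ℝ)
    (hu_cont : ContinuousOn (fun z : ℝ × ℝ => u z.1 z.2) (Set.Ici x₀ ×ˢ Set.Ici y₀))
    (hp_cont : ContinuousOn (fun z : ℝ × ℝ => p z.1 z.2) (Set.Ici x₀ ×ˢ Set.Ici y₀))
    (hu_nonneg : ∀ x y, x₀ ≤ x → y₀ ≤ y → 0 ≤ u x y)
    (hp_nonneg : ∀ x y, x₀ ≤ x → y₀ ≤ y → 0 ≤ p x y)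
    (hq_mono_x : ∀ x₁ x₂ y, x₀ ≤ x₁ → x₁ ≤ x₂ → y₀ ≤ y → q x₁ y ≤ q x₂ y)
    (hq_mono_y : ∀ x y₁ y₂, x₀ ≤ x → y₀ ≤ y₁ → y₁ ≤ y₂ → q x y₁ ≤ q x y₂)
    (hineq : ∀ x y, x₀ ≤ x → y₀ ≤ y →
      u x y ≤ q x y + ∫ s in x₀..x, ∫ η in x₀..s, ∫ τ in y₀..y, p η τ * u η τ) :
    ∀ x y, x₀ ≤ x → y₀ ≤ y →
      u x y ≤ q x y * Real.exp (∫ s in x₀..x, ∫ η in x₀..s, ∫ τ in y₀..y, p η τ) := by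
  intro X Y hX hY
  refine le_mul_exp_integral_integral_integral_of_continuousOn (q X Y) hX hY hu_cont hp_cont
    (fun x hx y hy => hu_nonneg x y hx.1 hy.1) (fun x hx y hy => hp_nonneg x y hx.1 hy.1)
    fun x hx y hy => (hineq x y hx.1 hy.1).trans ((add_le_add_iff_right _).2 ?_)
  calc q x y ≤ q X y := hq_mono_x x X y hx.1 hx.2 hy.1
    _ ≤ q X Y := hq_mono_y X y Y hX hy.1 hy.2

/-- Continuous (𝕋₁ = 𝕋₂ = ℝ) case of Theorem 2.2: a Gronwall-type inequality
with a positive nondecreasing forcing term q. -/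
theorem stmt_2 (x₀ y₀ : ℝ) (u p q : ℝ → ℝ → ℝ)
    (hu_cont : ContinuousOn (fun z : ℝ × ℝ => u z.1 z.2) (Set.Ici x₀ ×ˢ Set.Ici y₀))
    (hp_cont : ContinuousOn (fun z : ℝ × ℝ => p z.1 z.2) (Set.Ici x₀ ×ˢ Set.Ici y₀))
    (hq_cont : ContinuousOn (fun z : ℝ × ℝ => q z.1 z.2) (Set.Ici x₀ ×ˢ Set.Ici y₀))
    (hu_nonneg : ∀ x y, x₀ ≤ x → y₀ ≤ y → 0 ≤ u x y)
    (hp_nonneg : ∀ x y, x₀ ≤ x → y₀ ≤ y → 0 ≤ p x y)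
    (hq_pos : ∀ x y, x₀ ≤ x → y₀ ≤ y → 0 < q x y)
    (hq_mono_x : ∀ x₁ x₂ y, x₀ ≤ x₁ → x₁ ≤ x₂ → y₀ ≤ y → q x₁ y ≤ q x₂ y)
    (hq_mono_y : ∀ x y₁ y₂, x₀ ≤ x → y₀ ≤ y₁ → y₁ ≤ y₂ → q x y₁ ≤ q x y₂)
    (hineq : ∀ x y, x₀ ≤ x → y₀ ≤ y →
      u x y ≤ q x y + ∫ s in x₀..x, ∫ η in x₀..s, ∫ τ in y₀..y, p η τ * u η τ) :
    ∀ x y, x₀ ≤ x → y₀ ≤ y →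
      u x y ≤ q x y * Real.exp (∫ s in x₀..x, ∫ η in x₀..s, ∫ τ in y₀..y, p η τ) :=
  stmt_2_general x₀ y₀ u p q hu_cont hp_cont hu_nonneg hp_nonneg hq_mono_x hq_mono_y hineq
end

section
/- Let x₀, y₀ ∈ ℕ and let u, p, q : ℕ × ℕ → ℝ with u, p nonnegative, q(x,y) > 0 for all (x,y), and q nondecreasing in each of its two variables. If u(x,y) ≤ q(x,y) + Σ_{s=x₀}^{x−1} Σ_{η=x₀}^{s−1} Σ_{τ=y₀}^{y−1} p(η,τ) u(η,τ) for all x ≥ x₀ and y ≥ y₀, then u(x,y) ≤ q(x,y) · ∏_{s=x₀}^{x−1} ( 1 + Σ_{η=x₀}^{s−1} Σ_{τ=y₀}^{y−1} p(η,τ) ) for all x ≥ x₀ and y ≥ y₀. -/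
/-!
Let `E x y = ∏_{s ∈ [x₀, x)} (1 + ∑_{η ∈ [x₀, s)} ∑_{τ ∈ [y₀, y)} p η τ)`, the discrete exponential
of the paper. Telescoping the product gives
`E x y = 1 + ∑_{s ∈ [x₀, x)} (∑_{η ∈ [x₀, s)} ∑_{τ ∈ [y₀, y)} p η τ) · E s y`.
Now induct strongly on `x`: every `u η τ` in the hypothesis has `η < s < x`, so
`u η τ ≤ q η τ · E η τ ≤ q x y · E s y` because `q` and `E` are nondecreasing in both variables;
substituted into the hypothesis, the identity turns its right-hand side into `q x y · E x y`.
-/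

open Finset

theorem Finset.prod_Ico_one_add {R : Type*} [CommSemiring R] (f : ℕ → R) (a b : ℕ) :
    ∏ i ∈ Ico a b, (1 + f i) = 1 + ∑ i ∈ Ico a b, f i * ∏ j ∈ Ico a i, (1 + f j) := by
  rw [prod_one_add_ordered]
  congr 1
  refine sum_congr rfl fun i hi => ?_
  rw [Ico_filter_lt_of_le_right (mem_Ico.1 hi).2.le]

section GronwallFactor

variable (p : ℕ → ℕ → ℝ) (x₀ y₀ : ℕ)

noncomputable def gronwallFactor (x y : ℕ) : ℝ :=
  ∏ s ∈ Ico x₀ x, (1 + ∑ η ∈ Ico x₀ s, ∑ τ ∈ Ico y₀ y, p η τ)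

theorem gronwallFactor_eq_one_add_sum (x y : ℕ) :
    gronwallFactor p x₀ y₀ x y =
      1 + ∑ s ∈ Ico x₀ x, (∑ η ∈ Ico x₀ s, ∑ τ ∈ Ico y₀ y, p η τ) * gronwallFactor p x₀ y₀ s y :=
  prod_Ico_one_add _ x₀ x

variable {p}

theorem gronwallFactor_nonneg (hp : ∀ x y, 0 ≤ p x y) (x y : ℕ) :
    0 ≤ gronwallFactor p x₀ y₀ x y :=
  prod_nonneg fun _ _ =>
    add_nonneg zero_le_one <| sum_nonneg fun _ _ => sum_nonneg fun _ _ => hp _ _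

theorem gronwallFactor_mono (hp : ∀ x y, 0 ≤ p x y) {a b τ y : ℕ} (hab : a ≤ b) (hτy : τ ≤ y) :
    gronwallFactor p x₀ y₀ a τ ≤ gronwallFactor p x₀ y₀ b y := by
  have hsum_nonneg : ∀ s y, 0 ≤ ∑ η ∈ Ico x₀ s, ∑ τ ∈ Ico y₀ y, p η τ := fun _ _ =>
    sum_nonneg fun _ _ => sum_nonneg fun _ _ => hp _ _
  calc gronwallFactor p x₀ y₀ a τ ≤ gronwallFactor p x₀ y₀ a y := by
        unfold gronwallFactor
        gcongr
        · exact fun s _ => add_nonneg zero_le_one (hsum_nonneg s τ)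
        · exact fun _ _ _ => hp _ _
    _ ≤ gronwallFactor p x₀ y₀ b y := by
        unfold gronwallFactor
        gcongr
        · exact fun s _ => add_nonneg zero_le_one (hsum_nonneg s y)
        · exact fun s _ _ => le_add_of_nonneg_right (hsum_nonneg s y)

end GronwallFactor

theorem stmt_3_general (x₀ y₀ : ℕ) (u p q : ℕ → ℕ → ℝ)
    (hp_nonneg : ∀ x y, 0 ≤ p x y)
    (hq_pos : ∀ x y, 0 < q x y)
    (hq_mono_x : ∀ x₁ x₂ y, x₁ ≤ x₂ → q x₁ y ≤ q x₂ y)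
    (hq_mono_y : ∀ x y₁ y₂, y₁ ≤ y₂ → q x y₁ ≤ q x y₂)
    (hineq : ∀ x y, x₀ ≤ x → y₀ ≤ y →
      u x y ≤ q x y + ∑ s ∈ Finset.Ico x₀ x, ∑ η ∈ Finset.Ico x₀ s,
        ∑ τ ∈ Finset.Ico y₀ y, p η τ * u η τ) :
    ∀ x y, x₀ ≤ x → y₀ ≤ y →
      u x y ≤ q x y * ∏ s ∈ Finset.Ico x₀ x,
        (1 + ∑ η ∈ Finset.Ico x₀ s, ∑ τ ∈ Finset.Ico y₀ y, p η τ) := by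
  intro x
  induction x using Nat.strong_induction_on with
  | _ x ih =>
    intro y hx hy
    have hbound : ∀ s ∈ Ico x₀ x, ∀ η ∈ Ico x₀ s, ∀ τ ∈ Ico y₀ y,
        u η τ ≤ q x y * gronwallFactor p x₀ y₀ s y := by
      intro s hs η hη τ hτ
      rw [mem_Ico] at hs hη hτ
      calc u η τ ≤ q η τ * gronwallFactor p x₀ y₀ η τ := ih η (by omega) τ hη.1 hτ.1
        _ ≤ q x y * gronwallFactor p x₀ y₀ s y :=
          mul_le_mul ((hq_mono_x η x τ (by omega)).trans (hq_mono_y x τ y hτ.2.le))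
            (gronwallFactor_mono x₀ y₀ hp_nonneg hη.2.le hτ.2.le)
            (gronwallFactor_nonneg x₀ y₀ hp_nonneg η τ) (hq_pos x y).le
    calc u x y ≤ q x y + ∑ s ∈ Ico x₀ x, ∑ η ∈ Ico x₀ s, ∑ τ ∈ Ico y₀ y, p η τ * u η τ :=
          hineq x y hx hy
      _ ≤ q x y + ∑ s ∈ Ico x₀ x, ∑ η ∈ Ico x₀ s, ∑ τ ∈ Ico y₀ y,
            p η τ * (q x y * gronwallFactor p x₀ y₀ s y) := by
          gcongr with s hs η hη τ hτ
          · exact hp_nonneg η τ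
          · exact hbound s hs η hη τ hτ
      _ = q x y * gronwallFactor p x₀ y₀ x y := by
          simp only [gronwallFactor_eq_one_add_sum p x₀ y₀ x, mul_add, mul_one, mul_sum, sum_mul,
            mul_left_comm]

/-- Discrete (𝕋₁ = 𝕋₂ = ℤ) case of Theorem 2.2: a Gronwall-type inequality
with a positive nondecreasing forcing term q. -/
theorem stmt_3 (x₀ y₀ : ℕ) (u p q : ℕ → ℕ → ℝ)
    (hu_nonneg : ∀ x y, 0 ≤ u x y)
    (hp_nonneg : ∀ x y, 0 ≤ p x y)
    (hq_pos : ∀ x y, 0 < q x y)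
    (hq_mono_x : ∀ x₁ x₂ y, x₁ ≤ x₂ → q x₁ y ≤ q x₂ y)
    (hq_mono_y : ∀ x y₁ y₂, y₁ ≤ y₂ → q x y₁ ≤ q x y₂)
    (hineq : ∀ x y, x₀ ≤ x → y₀ ≤ y →
      u x y ≤ q x y + ∑ s ∈ Finset.Ico x₀ x, ∑ η ∈ Finset.Ico x₀ s,
        ∑ τ ∈ Finset.Ico y₀ y, p η τ * u η τ) :
    ∀ x y, x₀ ≤ x → y₀ ≤ y →
      u x y ≤ q x y * ∏ s ∈ Finset.Ico x₀ x,
        (1 + ∑ η ∈ Finset.Ico x₀ s, ∑ τ ∈ Finset.Ico y₀ y, p η τ) :=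
  stmt_3_general x₀ y₀ u p q hp_nonneg hq_pos hq_mono_x hq_mono_y hineq
end

section
/- Let x₀, y₀ ∈ ℕ, let u, g, h : ℕ × ℕ → [0,∞), and let L, H : ℕ × ℕ × [0,∞) → [0,∞) satisfy 0 ≤ L(x,y,u) − L(x,y,v) ≤ H(x,y,v)·(u − v) whenever u ≥ v ≥ 0. If u(x,y) ≤ g(x,y) + h(x,y) Σ_{s=x₀}^{x−1} Σ_{η=x₀}^{s−1} Σ_{τ=y₀}^{y−1} L(η,τ,u(η,τ)) for all x ≥ x₀ and y ≥ y₀, then u(x,y) ≤ g(x,y) + h(x,y) · ( Σ_{s=x₀}^{x−1} Σ_{η=x₀}^{s−1} Σ_{τ=y₀}^{y−1} L(η,τ,g(η,τ)) ) · ∏_{s=x₀}^{x−1} ( 1 + Σ_{η=x₀}^{s−1} Σ_{τ=y₀}^{y−1} H(η,τ,g(η,τ)) h(η,τ) ) for all x ≥ x₀ and y ≥ y₀. -/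
open Finset

/-- The triple sum with kernel applied to `w`. -/
private def Vv (x₀ y₀ y : ℕ) (w : ℕ → ℕ → ℝ) (L : ℕ → ℕ → ℝ → ℝ) (n : ℕ) : ℝ :=
  ∑ s ∈ Ico x₀ n, ∑ η ∈ Ico x₀ s, ∑ τ ∈ Ico y₀ y, L η τ (w η τ)

/-- The coefficient sum. -/
private def Bb (x₀ y₀ y : ℕ) (g h : ℕ → ℕ → ℝ) (H : ℕ → ℕ → ℝ → ℝ) (n : ℕ) : ℝ :=
  ∑ η ∈ Ico x₀ n, ∑ τ ∈ Ico y₀ y, H η τ (g η τ) * h η τ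

private lemma Vv_nonneg (x₀ y₀ y : ℕ) (w : ℕ → ℕ → ℝ) (L : ℕ → ℕ → ℝ → ℝ)
    (hw : ∀ x y, 0 ≤ w x y) (hL : ∀ x y z, 0 ≤ z → 0 ≤ L x y z) (n : ℕ) :
    0 ≤ Vv x₀ y₀ y w L n :=
  Finset.sum_nonneg fun _ _ => Finset.sum_nonneg fun _ _ => Finset.sum_nonneg fun _ _ =>
    hL _ _ _ (hw _ _)

private lemma Vv_mono (x₀ y₀ y : ℕ) (w : ℕ → ℕ → ℝ) (L : ℕ → ℕ → ℝ → ℝ)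
    (hw : ∀ x y, 0 ≤ w x y) (hL : ∀ x y z, 0 ≤ z → 0 ≤ L x y z) {m n : ℕ} (hmn : m ≤ n) :
    Vv x₀ y₀ y w L m ≤ Vv x₀ y₀ y w L n := by
  apply Finset.sum_le_sum_of_subset_of_nonneg (Finset.Ico_subset_Ico le_rfl hmn)
  intro i _ _
  exact Finset.sum_nonneg fun _ _ => Finset.sum_nonneg fun _ _ => hL _ _ _ (hw _ _)

private lemma Bb_nonneg (x₀ y₀ y : ℕ) (g h : ℕ → ℕ → ℝ) (H : ℕ → ℕ → ℝ → ℝ)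
    (hg : ∀ x y, 0 ≤ g x y) (hh : ∀ x y, 0 ≤ h x y)
    (hH : ∀ x y z, 0 ≤ z → 0 ≤ H x y z) (n : ℕ) :
    0 ≤ Bb x₀ y₀ y g h H n :=
  Finset.sum_nonneg fun _ _ => Finset.sum_nonneg fun _ _ =>
    mul_nonneg (hH _ _ _ (hg _ _)) (hh _ _)

private lemma aux (x₀ y₀ y : ℕ) (u g h : ℕ → ℕ → ℝ) (L H : ℕ → ℕ → ℝ → ℝ)
    (hu_nonneg : ∀ x y, 0 ≤ u x y)
    (hg_nonneg : ∀ x y, 0 ≤ g x y)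
    (hh_nonneg : ∀ x y, 0 ≤ h x y)
    (hL_nonneg : ∀ x y z, 0 ≤ z → 0 ≤ L x y z)
    (hH_nonneg : ∀ x y z, 0 ≤ z → 0 ≤ H x y z)
    (hLip : ∀ x y, ∀ a b : ℝ, 0 ≤ b → b ≤ a →
      0 ≤ L x y a - L x y b ∧ L x y a - L x y b ≤ H x y b * (a - b))
    (hineq : ∀ x y, x₀ ≤ x → y₀ ≤ y →
      u x y ≤ g x y + h x y * ∑ s ∈ Finset.Ico x₀ x, ∑ η ∈ Finset.Ico x₀ s,
        ∑ τ ∈ Finset.Ico y₀ y, L η τ (u η τ))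
    (hy : y₀ ≤ y) :
    ∀ n, x₀ ≤ n → Vv x₀ y₀ y u L n ≤
      Vv x₀ y₀ y g L n * ∏ s ∈ Ico x₀ n, (1 + Bb x₀ y₀ y g h H s) := by
  intro n hn
  induction n, hn using Nat.le_induction with
  | base => simp [Vv]
  | succ n hn ih =>
    have hB := Bb_nonneg x₀ y₀ y g h H hg_nonneg hh_nonneg hH_nonneg
    have hVu := Vv_nonneg x₀ y₀ y u L hu_nonneg hL_nonneg
    -- pointwise bound on the new slice
    have hpt : ∀ η ∈ Ico x₀ n, ∀ τ ∈ Ico y₀ y,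
        L η τ (u η τ) ≤ L η τ (g η τ) + H η τ (g η τ) * (h η τ * Vv x₀ y₀ y u L n) := by
      intro η hη τ hτ
      simp only [Finset.mem_Ico] at hη hτ
      have hu_le : u η τ ≤ g η τ + h η τ * Vv x₀ y₀ y u L n := by
        have h1 := hineq η τ hη.1 hτ.1
        have h2 : (∑ s ∈ Finset.Ico x₀ η, ∑ η' ∈ Finset.Ico x₀ s,
            ∑ τ' ∈ Finset.Ico y₀ τ, L η' τ' (u η' τ')) ≤ Vv x₀ y₀ y u L n := by
          refine le_trans ?_ (Vv_mono x₀ y₀ y u L hu_nonneg hL_nonneg hη.2.le)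
          apply Finset.sum_le_sum; intro s _
          apply Finset.sum_le_sum; intro η' _
          apply Finset.sum_le_sum_of_subset_of_nonneg
            (Finset.Ico_subset_Ico le_rfl hτ.2.le)
          intro i _ _; exact hL_nonneg _ _ _ (hu_nonneg _ _)
        calc u η τ ≤ g η τ + h η τ * ∑ s ∈ Finset.Ico x₀ η, ∑ η' ∈ Finset.Ico x₀ s,
              ∑ τ' ∈ Finset.Ico y₀ τ, L η' τ' (u η' τ') := h1
          _ ≤ g η τ + h η τ * Vv x₀ y₀ y u L n := by
              have := mul_le_mul_of_nonneg_left h2 (hh_nonneg η τ)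
              linarith
      have hc_nonneg : 0 ≤ g η τ + h η τ * Vv x₀ y₀ y u L n := by
        have := mul_nonneg (hh_nonneg η τ) (hVu n)
        linarith [hg_nonneg η τ]
      have hm1 := (hLip η τ (g η τ + h η τ * Vv x₀ y₀ y u L n) (u η τ)
        (hu_nonneg η τ) hu_le).1
      have hm2 := (hLip η τ (g η τ + h η τ * Vv x₀ y₀ y u L n) (g η τ)
        (hg_nonneg η τ) (by nlinarith [mul_nonneg (hh_nonneg η τ) (hVu n)])).2
      have : g η τ + h η τ * Vv x₀ y₀ y u L n - g η τ = h η τ * Vv x₀ y₀ y u L n := by ring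
      rw [this] at hm2
      linarith
    -- sum the slice bound
    have hslice : (∑ η ∈ Ico x₀ n, ∑ τ ∈ Ico y₀ y, L η τ (u η τ)) ≤
        (∑ η ∈ Ico x₀ n, ∑ τ ∈ Ico y₀ y, L η τ (g η τ)) +
          Bb x₀ y₀ y g h H n * Vv x₀ y₀ y u L n := by
      have h1 : (∑ η ∈ Ico x₀ n, ∑ τ ∈ Ico y₀ y, L η τ (u η τ)) ≤
          ∑ η ∈ Ico x₀ n, ∑ τ ∈ Ico y₀ y,
            (L η τ (g η τ) + H η τ (g η τ) * (h η τ * Vv x₀ y₀ y u L n)) := by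
        apply Finset.sum_le_sum; intro η hη
        apply Finset.sum_le_sum; intro τ hτ
        exact hpt η hη τ hτ
      refine h1.trans (le_of_eq ?_)
      rw [Bb, Finset.sum_mul]
      rw [← Finset.sum_add_distrib]
      apply Finset.sum_congr rfl; intro η _
      rw [Finset.sum_mul, ← Finset.sum_add_distrib]
      apply Finset.sum_congr rfl; intro τ _
      ring
    -- recurrences
    have hVsucc : Vv x₀ y₀ y u L (n+1) =
        Vv x₀ y₀ y u L n + ∑ η ∈ Ico x₀ n, ∑ τ ∈ Ico y₀ y, L η τ (u η τ) := by
      rw [Vv, Finset.sum_Ico_succ_top hn]; rfl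
    have hAsucc : Vv x₀ y₀ y g L (n+1) =
        Vv x₀ y₀ y g L n + ∑ η ∈ Ico x₀ n, ∑ τ ∈ Ico y₀ y, L η τ (g η τ) := by
      rw [Vv, Finset.sum_Ico_succ_top hn]; rfl
    have hPsucc : (∏ s ∈ Ico x₀ (n+1), (1 + Bb x₀ y₀ y g h H s)) =
        (∏ s ∈ Ico x₀ n, (1 + Bb x₀ y₀ y g h H s)) * (1 + Bb x₀ y₀ y g h H n) :=
      Finset.prod_Ico_succ_top hn _
    set a := ∑ η ∈ Ico x₀ n, ∑ τ ∈ Ico y₀ y, L η τ (g η τ) with ha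
    have ha_nonneg : 0 ≤ a :=
      Finset.sum_nonneg fun _ _ => Finset.sum_nonneg fun _ _ => hL_nonneg _ _ _ (hg_nonneg _ _)
    have hPn1 : (1:ℝ) ≤ ∏ s ∈ Ico x₀ n, (1 + Bb x₀ y₀ y g h H s) := by
      calc (1:ℝ) = ∏ _s ∈ Ico x₀ n, (1:ℝ) := by simp
        _ ≤ _ := Finset.prod_le_prod (fun s _ => zero_le_one) (fun s _ => by linarith [hB s])
    rw [hVsucc, hAsucc, hPsucc]
    set vn := Vv x₀ y₀ y u L n
    set An := Vv x₀ y₀ y g L n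
    set Pn := ∏ s ∈ Ico x₀ n, (1 + Bb x₀ y₀ y g h H s)
    set b := Bb x₀ y₀ y g h H n
    -- vn + slice ≤ vn + a + b*vn ≤ (An + a) * (Pn * (1+b))
    have key : vn + (a + b * vn) ≤ (An + a) * (Pn * (1 + b)) := by
      have h1 : vn * (1 + b) ≤ An * Pn * (1 + b) :=
        mul_le_mul_of_nonneg_right ih (by linarith [hB n])
      have h2 : a ≤ a * (Pn * (1 + b)) := by
        nlinarith [mul_le_mul_of_nonneg_left (show (1:ℝ) ≤ 1 + b by linarith [hB n]) (le_trans zero_le_one hPn1), ha_nonneg]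
      nlinarith [h1, h2]
    linarith [hslice, key]

/-- Discrete (𝕋₁ = 𝕋₂ = ℤ) case of Theorem 2.3: a nonlinear Gronwall-type
inequality whose kernel L satisfies a one-sided Lipschitz condition with
comparison function H. -/
theorem stmt_5 (x₀ y₀ : ℕ) (u g h : ℕ → ℕ → ℝ) (L H : ℕ → ℕ → ℝ → ℝ)
    (hu_nonneg : ∀ x y, 0 ≤ u x y)
    (hg_nonneg : ∀ x y, 0 ≤ g x y)
    (hh_nonneg : ∀ x y, 0 ≤ h x y)
    (hL_nonneg : ∀ x y z, 0 ≤ z → 0 ≤ L x y z)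
    (hH_nonneg : ∀ x y z, 0 ≤ z → 0 ≤ H x y z)
    (hLip : ∀ x y, ∀ a b : ℝ, 0 ≤ b → b ≤ a →
      0 ≤ L x y a - L x y b ∧ L x y a - L x y b ≤ H x y b * (a - b))
    (hineq : ∀ x y, x₀ ≤ x → y₀ ≤ y →
      u x y ≤ g x y + h x y * ∑ s ∈ Finset.Ico x₀ x, ∑ η ∈ Finset.Ico x₀ s,
        ∑ τ ∈ Finset.Ico y₀ y, L η τ (u η τ)) :
    ∀ x y, x₀ ≤ x → y₀ ≤ y →
      u x y ≤ g x y + h x y *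
        (∑ s ∈ Finset.Ico x₀ x, ∑ η ∈ Finset.Ico x₀ s,
          ∑ τ ∈ Finset.Ico y₀ y, L η τ (g η τ)) *
        ∏ s ∈ Finset.Ico x₀ x,
          (1 + ∑ η ∈ Finset.Ico x₀ s, ∑ τ ∈ Finset.Ico y₀ y,
            H η τ (g η τ) * h η τ) := by
  intro x y hx hy
  have hkey := aux x₀ y₀ y u g h L H hu_nonneg hg_nonneg hh_nonneg hL_nonneg hH_nonneg
    hLip hineq hy x hx
  have h1 := hineq x y hx hy
  calc u x y ≤ g x y + h x y * Vv x₀ y₀ y u L x := h1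
    _ ≤ g x y + h x y * (Vv x₀ y₀ y g L x * ∏ s ∈ Ico x₀ x, (1 + Bb x₀ y₀ y g h H s)) := by
        have := mul_le_mul_of_nonneg_left hkey (hh_nonneg x y)
        linarith
    _ = g x y + h x y *
        (∑ s ∈ Finset.Ico x₀ x, ∑ η ∈ Finset.Ico x₀ s,
          ∑ τ ∈ Finset.Ico y₀ y, L η τ (g η τ)) *
        ∏ s ∈ Finset.Ico x₀ x,
          (1 + ∑ η ∈ Finset.Ico x₀ s, ∑ τ ∈ Finset.Ico y₀ y,
            H η τ (g η τ) * h η τ) := by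
        simp only [Vv, Bb]; ring
end

section
/- Let x₀, y₀ ∈ ℕ and let u, g, h, p : ℕ × ℕ → [0,∞). If u(x,y) ≤ g(x,y) + h(x,y) Σ_{s=x₀}^{x−1} Σ_{η=x₀}^{s−1} Σ_{τ=y₀}^{y−1} p(η,τ) u(η,τ) for all x ≥ x₀ and y ≥ y₀, then u(x,y) ≤ g(x,y) + h(x,y) · ( Σ_{s=x₀}^{x−1} Σ_{η=x₀}^{s−1} Σ_{τ=y₀}^{y−1} p(η,τ) g(η,τ) ) · ∏_{s=x₀}^{x−1} ( 1 + Σ_{η=x₀}^{s−1} Σ_{τ=y₀}^{y−1} p(η,τ) h(η,τ) ) for all x ≥ x₀ and y ≥ y₀. -/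
lemma gronwall_aux (x₀ : ℕ) (v a b : ℕ → ℝ) (ha : ∀ x, 0 ≤ a x) (hb : ∀ x, 0 ≤ b x)
    (hv0 : v x₀ = 0)
    (hstep : ∀ x, x₀ ≤ x → v (x + 1) ≤ v x + a x + b x * v x) :
    ∀ x, x₀ ≤ x → v x ≤ (∑ s ∈ Finset.Ico x₀ x, a s) * ∏ s ∈ Finset.Ico x₀ x, (1 + b s) := by
  intro x hx
  induction x, hx using Nat.le_induction with
  | base => simp [hv0]
  | succ n hn ih =>
    have hP : (1:ℝ) ≤ ∏ s ∈ Finset.Ico x₀ n, (1 + b s) := by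
      have := Finset.prod_le_prod (s := Finset.Ico x₀ n) (f := fun _ => (1:ℝ))
        (g := fun s => 1 + b s) (fun i _ => zero_le_one) (fun i _ => by simp [hb i])
      simpa using this
    have hA : 0 ≤ ∑ s ∈ Finset.Ico x₀ n, a s := Finset.sum_nonneg fun i _ => ha i
    rw [Finset.sum_Ico_succ_top hn, Finset.prod_Ico_succ_top hn]
    have h1 := hstep n hn
    have h2 : b n * v n ≤ b n * ((∑ s ∈ Finset.Ico x₀ n, a s) * ∏ s ∈ Finset.Ico x₀ n, (1 + b s)) :=
      mul_le_mul_of_nonneg_left ih (hb n)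
    nlinarith [ha n, hb n, mul_nonneg hA (le_trans zero_le_one hP),
      mul_le_mul_of_nonneg_left hP (mul_nonneg (ha n) (by linarith [hb n] : (0:ℝ) ≤ 1 + b n))]

/-- Discrete (𝕋₁ = 𝕋₂ = ℤ) case of Theorem 2.4: the linear-kernel special
case L(η,τ,u) = p(η,τ)·u of Theorem 2.3. -/
theorem stmt_7 (x₀ y₀ : ℕ) (u g h p : ℕ → ℕ → ℝ)
    (hu_nonneg : ∀ x y, 0 ≤ u x y)
    (hg_nonneg : ∀ x y, 0 ≤ g x y)
    (hh_nonneg : ∀ x y, 0 ≤ h x y)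
    (hp_nonneg : ∀ x y, 0 ≤ p x y)
    (hineq : ∀ x y, x₀ ≤ x → y₀ ≤ y →
      u x y ≤ g x y + h x y * ∑ s ∈ Finset.Ico x₀ x, ∑ η ∈ Finset.Ico x₀ s,
        ∑ τ ∈ Finset.Ico y₀ y, p η τ * u η τ) :
    ∀ x y, x₀ ≤ x → y₀ ≤ y →
      u x y ≤ g x y + h x y *
        (∑ s ∈ Finset.Ico x₀ x, ∑ η ∈ Finset.Ico x₀ s,
          ∑ τ ∈ Finset.Ico y₀ y, p η τ * g η τ) *
        ∏ s ∈ Finset.Ico x₀ x,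
          (1 + ∑ η ∈ Finset.Ico x₀ s, ∑ τ ∈ Finset.Ico y₀ y, p η τ * h η τ) := by
  intro x y hx hy
  -- fix y and set up 1-d quantities
  set v : ℕ → ℝ := fun z => ∑ s ∈ Finset.Ico x₀ z, ∑ η ∈ Finset.Ico x₀ s,
      ∑ τ ∈ Finset.Ico y₀ y, p η τ * u η τ with hv_def
  set a : ℕ → ℝ := fun s => ∑ η ∈ Finset.Ico x₀ s, ∑ τ ∈ Finset.Ico y₀ y, p η τ * g η τ with ha_def
  set b : ℕ → ℝ := fun s => ∑ η ∈ Finset.Ico x₀ s, ∑ τ ∈ Finset.Ico y₀ y, p η τ * h η τ with hb_def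
  have ha : ∀ s, 0 ≤ a s := fun s => Finset.sum_nonneg fun η _ => Finset.sum_nonneg fun τ _ =>
    mul_nonneg (hp_nonneg η τ) (hg_nonneg η τ)
  have hbn : ∀ s, 0 ≤ b s := fun s => Finset.sum_nonneg fun η _ => Finset.sum_nonneg fun τ _ =>
    mul_nonneg (hp_nonneg η τ) (hh_nonneg η τ)
  have hvmono : ∀ z z', z ≤ z' → v z ≤ v z' := by
    intro z z' hz
    apply Finset.sum_le_sum_of_subset_of_nonneg (Finset.Ico_subset_Ico le_rfl hz)
    intro i _ _
    exact Finset.sum_nonneg fun η _ => Finset.sum_nonneg fun τ _ =>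
      mul_nonneg (hp_nonneg η τ) (hu_nonneg η τ)
  have hstep : ∀ z, x₀ ≤ z → v (z + 1) ≤ v z + a z + b z * v z := by
    intro z hz
    have hsplit : v (z + 1) = v z + ∑ η ∈ Finset.Ico x₀ z, ∑ τ ∈ Finset.Ico y₀ y, p η τ * u η τ := by
      simp [hv_def, Finset.sum_Ico_succ_top hz]
    rw [hsplit]
    have hkey : ∑ η ∈ Finset.Ico x₀ z, ∑ τ ∈ Finset.Ico y₀ y, p η τ * u η τ ≤ a z + b z * v z := by
      have : ∀ η ∈ Finset.Ico x₀ z, ∀ τ ∈ Finset.Ico y₀ y,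
          p η τ * u η τ ≤ p η τ * g η τ + p η τ * h η τ * v z := by
        intro η hη τ hτ
        rw [Finset.mem_Ico] at hη hτ
        have huineq := hineq η τ hη.1 hτ.1
        have hS : (∑ s ∈ Finset.Ico x₀ η, ∑ η' ∈ Finset.Ico x₀ s,
            ∑ τ' ∈ Finset.Ico y₀ τ, p η' τ' * u η' τ') ≤ v z := by
          refine le_trans ?_ (hvmono η z hη.2.le)
          apply Finset.sum_le_sum
          intro s _
          apply Finset.sum_le_sum
          intro η' _
          apply Finset.sum_le_sum_of_subset_of_nonneg (Finset.Ico_subset_Ico le_rfl hτ.2.le)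
          intro i _ _
          exact mul_nonneg (hp_nonneg η' i) (hu_nonneg η' i)
        have hu2 : u η τ ≤ g η τ + h η τ * v z := by
          refine le_trans huineq ?_
          have := mul_le_mul_of_nonneg_left hS (hh_nonneg η τ)
          linarith
        calc p η τ * u η τ ≤ p η τ * (g η τ + h η τ * v z) :=
              mul_le_mul_of_nonneg_left hu2 (hp_nonneg η τ)
          _ = p η τ * g η τ + p η τ * h η τ * v z := by ring
      calc ∑ η ∈ Finset.Ico x₀ z, ∑ τ ∈ Finset.Ico y₀ y, p η τ * u η τ
          ≤ ∑ η ∈ Finset.Ico x₀ z, ∑ τ ∈ Finset.Ico y₀ y, (p η τ * g η τ + p η τ * h η τ * v z) :=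
            Finset.sum_le_sum fun η hη => Finset.sum_le_sum fun τ hτ => this η hη τ hτ
        _ = a z + b z * v z := by
            simp only [Finset.sum_add_distrib, ha_def, hb_def, ← Finset.sum_mul]
    linarith
  have hv0 : v x₀ = 0 := by simp [hv_def]
  have hmain := gronwall_aux x₀ v a b ha hbn hv0 hstep x hx
  have hu2 := hineq x y hx hy
  have := mul_le_mul_of_nonneg_left hmain (hh_nonneg x y)
  calc u x y ≤ g x y + h x y * v x := hu2
    _ ≤ g x y + h x y * ((∑ s ∈ Finset.Ico x₀ x, a s) * ∏ s ∈ Finset.Ico x₀ x, (1 + b s)) := by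
        linarith
    _ = _ := by rw [← mul_assoc]
end

section
/- Let x₀, y₀ ∈ ℕ, let g : ℕ × ℕ → ℝ and K : ℕ × ℕ × ℕ × ℕ × ℝ → ℝ, and let p, q, r : ℕ × ℕ → [0,∞) be such that (i) |K(x,y,η,τ,u) − K(x,y,η,τ,v)| ≤ q(x,y) r(η,τ) |u − v| for all arguments and all u, v ∈ ℝ, and (ii) |g(x,y) + Σ_{s=x₀}^{x−1} Σ_{η=x₀}^{s−1} Σ_{τ=y₀}^{y−1} K(x,y,η,τ,0)| ≤ p(x,y) for all x ≥ x₀ and y ≥ y₀. If a function u : ℕ × ℕ → ℝ satisfies u(x,y) = g(x,y) + Σ_{s=x₀}^{x−1} Σ_{η=x₀}^{s−1} Σ_{τ=y₀}^{y−1} K(x,y,η,τ,u(η,τ)) for all x ≥ x₀ and y ≥ y₀, then |u(x,y)| ≤ p(x,y) + q(x,y) · ( Σ_{s=x₀}^{x−1} Σ_{η=x₀}^{s−1} Σ_{τ=y₀}^{y−1} r(η,τ) p(η,τ) ) · ∏_{s=x₀}^{x−1} ( 1 + Σ_{η=x₀}^{s−1} Σ_{τ=y₀}^{y−1} r(η,τ)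 q(η,τ) ) for all x ≥ x₀ and y ≥ y₀. -/
/-- Discrete Gronwall-type lemma. -/
private lemma gron_aux (x₀ : ℕ) (w b c : ℕ → ℝ) (hb : ∀ s, 0 ≤ b s)
    (hc : ∀ s, 0 ≤ c s) (h0 : w x₀ = 0)
    (hstep : ∀ x, x₀ ≤ x → w (x + 1) ≤ w x + (b x + c x * w x)) :
    ∀ x, x₀ ≤ x →
      w x ≤ (∑ s ∈ Finset.Ico x₀ x, b s) * ∏ s ∈ Finset.Ico x₀ x, (1 + c s) := by
  intro x hx
  induction x, hx using Nat.le_induction with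
  | base => simp [h0]
  | succ x hx ih =>
    have hD : 0 ≤ ∑ s ∈ Finset.Ico x₀ x, b s := Finset.sum_nonneg fun s _ => hb s
    have hP : 1 ≤ ∏ s ∈ Finset.Ico x₀ x, (1 + c s) := by
      calc (1:ℝ) = ∏ _s ∈ Finset.Ico x₀ x, (1:ℝ) := by simp
        _ ≤ ∏ s ∈ Finset.Ico x₀ x, (1 + c s) :=
          Finset.prod_le_prod (fun i _ => zero_le_one) (fun i _ => by linarith [hc i])
    rw [Finset.sum_Ico_succ_top hx, Finset.prod_Ico_succ_top hx]
    set D := ∑ s ∈ Finset.Ico x₀ x, b s with hDdef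
    set P := ∏ s ∈ Finset.Ico x₀ x, (1 + c s) with hPdef
    have h1 : w (x + 1) ≤ (1 + c x) * w x + b x := by linarith [hstep x hx]
    have h2 : (1 + c x) * w x ≤ (1 + c x) * (D * P) :=
      mul_le_mul_of_nonneg_left ih (by linarith [hc x])
    have h3 : b x ≤ b x * ((1 + c x) * P) :=
      le_mul_of_one_le_right (hb x) (by nlinarith [hc x])
    have e : (D + b x) * (P * (1 + c x)) = (1 + c x) * (D * P) + b x * ((1 + c x) * P) := by
      ring
    rw [e]; linarith

/-- Discrete (𝕋₁ = 𝕋₂ = ℤ) case of Theorem 3.1: an explicit bound on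
solutions of the sum equation
u(x,y) = g(x,y) + ΣΣΣ K(x,y,η,τ,u(η,τ)). -/
theorem stmt_9 (x₀ y₀ : ℕ) (g : ℕ → ℕ → ℝ) (K : ℕ → ℕ → ℕ → ℕ → ℝ → ℝ)
    (p q r : ℕ → ℕ → ℝ) (u : ℕ → ℕ → ℝ)
    (hp_nonneg : ∀ x y, 0 ≤ p x y)
    (hq_nonneg : ∀ x y, 0 ≤ q x y)
    (hr_nonneg : ∀ x y, 0 ≤ r x y)
    (hK_lip : ∀ x y η τ, ∀ a b : ℝ,
      |K x y η τ a - K x y η τ b| ≤ q x y * r η τ * |a - b|)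
    (hgK_bound : ∀ x y, x₀ ≤ x → y₀ ≤ y →
      |g x y + ∑ s ∈ Finset.Ico x₀ x, ∑ η ∈ Finset.Ico x₀ s,
        ∑ τ ∈ Finset.Ico y₀ y, K x y η τ 0| ≤ p x y)
    (hu_sol : ∀ x y, x₀ ≤ x → y₀ ≤ y →
      u x y = g x y + ∑ s ∈ Finset.Ico x₀ x, ∑ η ∈ Finset.Ico x₀ s,
        ∑ τ ∈ Finset.Ico y₀ y, K x y η τ (u η τ)) :
    ∀ x y, x₀ ≤ x → y₀ ≤ y →
      |u x y| ≤ p x y + q x y *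
        (∑ s ∈ Finset.Ico x₀ x, ∑ η ∈ Finset.Ico x₀ s,
          ∑ τ ∈ Finset.Ico y₀ y, r η τ * p η τ) *
        ∏ s ∈ Finset.Ico x₀ x,
          (1 + ∑ η ∈ Finset.Ico x₀ s, ∑ τ ∈ Finset.Ico y₀ y, r η τ * q η τ) := by
  -- Step 1: |u x y| ≤ p x y + q x y * W x y, with W the triple sum of r * |u|.
  have habs : ∀ x y, x₀ ≤ x → y₀ ≤ y → |u x y| ≤ p x y + q x y *
      ∑ s ∈ Finset.Ico x₀ x, ∑ η ∈ Finset.Ico x₀ s,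
        ∑ τ ∈ Finset.Ico y₀ y, r η τ * |u η τ| := by
    intro x y hx hy
    rw [hu_sol x y hx hy]
    have split : g x y + (∑ s ∈ Finset.Ico x₀ x, ∑ η ∈ Finset.Ico x₀ s,
        ∑ τ ∈ Finset.Ico y₀ y, K x y η τ (u η τ)) =
        (g x y + ∑ s ∈ Finset.Ico x₀ x, ∑ η ∈ Finset.Ico x₀ s,
          ∑ τ ∈ Finset.Ico y₀ y, K x y η τ 0) +
        ∑ s ∈ Finset.Ico x₀ x, ∑ η ∈ Finset.Ico x₀ s,
          ∑ τ ∈ Finset.Ico y₀ y, (K x y η τ (u η τ) - K x y η τ 0) := by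
      simp only [Finset.sum_sub_distrib]
      ring
    rw [split]
    have t1 : |(g x y + ∑ s ∈ Finset.Ico x₀ x, ∑ η ∈ Finset.Ico x₀ s,
          ∑ τ ∈ Finset.Ico y₀ y, K x y η τ 0) +
        ∑ s ∈ Finset.Ico x₀ x, ∑ η ∈ Finset.Ico x₀ s,
          ∑ τ ∈ Finset.Ico y₀ y, (K x y η τ (u η τ) - K x y η τ 0)| ≤
        p x y + |∑ s ∈ Finset.Ico x₀ x, ∑ η ∈ Finset.Ico x₀ s,
          ∑ τ ∈ Finset.Ico y₀ y, (K x y η τ (u η τ) - K x y η τ 0)| :=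
      (abs_add_le _ _).trans (by linarith [hgK_bound x y hx hy])
    refine t1.trans ?_
    have t2 : |∑ s ∈ Finset.Ico x₀ x, ∑ η ∈ Finset.Ico x₀ s,
          ∑ τ ∈ Finset.Ico y₀ y, (K x y η τ (u η τ) - K x y η τ 0)| ≤
        ∑ s ∈ Finset.Ico x₀ x, ∑ η ∈ Finset.Ico x₀ s,
          ∑ τ ∈ Finset.Ico y₀ y, |K x y η τ (u η τ) - K x y η τ 0| :=
      (Finset.abs_sum_le_sum_abs _ _).trans (Finset.sum_le_sum fun s _ =>
        (Finset.abs_sum_le_sum_abs _ _).trans (Finset.sum_le_sum fun η _ =>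
          Finset.abs_sum_le_sum_abs _ _))
    have t3 : ∑ s ∈ Finset.Ico x₀ x, ∑ η ∈ Finset.Ico x₀ s,
          ∑ τ ∈ Finset.Ico y₀ y, |K x y η τ (u η τ) - K x y η τ 0| ≤
        ∑ s ∈ Finset.Ico x₀ x, ∑ η ∈ Finset.Ico x₀ s,
          ∑ τ ∈ Finset.Ico y₀ y, q x y * (r η τ * |u η τ|) := by
      refine Finset.sum_le_sum fun s _ => Finset.sum_le_sum fun η _ =>
        Finset.sum_le_sum fun τ _ => ?_
      have := hK_lip x y η τ (u η τ) 0
      rw [sub_zero] at this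
      linarith [this]
    have t4 : ∑ s ∈ Finset.Ico x₀ x, ∑ η ∈ Finset.Ico x₀ s,
          ∑ τ ∈ Finset.Ico y₀ y, q x y * (r η τ * |u η τ|) =
        q x y * ∑ s ∈ Finset.Ico x₀ x, ∑ η ∈ Finset.Ico x₀ s,
          ∑ τ ∈ Finset.Ico y₀ y, r η τ * |u η τ| := by
      simp [Finset.mul_sum]
    linarith
  intro x y hx hy
  -- Step 2: Gronwall on w x := W x y for fixed y.
  set w : ℕ → ℝ := fun z => ∑ s ∈ Finset.Ico x₀ z, ∑ η ∈ Finset.Ico x₀ s,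
    ∑ τ ∈ Finset.Ico y₀ y, r η τ * |u η τ| with hwdef
  have hw_nonneg : ∀ z, 0 ≤ w z := fun z =>
    Finset.sum_nonneg fun s _ => Finset.sum_nonneg fun η _ =>
      Finset.sum_nonneg fun τ _ => mul_nonneg (hr_nonneg η τ) (abs_nonneg _)
  have hw_mono : ∀ z z', z ≤ z' → w z ≤ w z' := fun z z' h =>
    Finset.sum_le_sum_of_subset_of_nonneg (Finset.Ico_subset_Ico_right h)
      (fun s _ _ => Finset.sum_nonneg fun η _ => Finset.sum_nonneg fun τ _ =>
        mul_nonneg (hr_nonneg η τ) (abs_nonneg _))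
  have hgron := gron_aux x₀ w
    (fun s => ∑ η ∈ Finset.Ico x₀ s, ∑ τ ∈ Finset.Ico y₀ y, r η τ * p η τ)
    (fun s => ∑ η ∈ Finset.Ico x₀ s, ∑ τ ∈ Finset.Ico y₀ y, r η τ * q η τ)
    (fun s => Finset.sum_nonneg fun η _ => Finset.sum_nonneg fun τ _ =>
      mul_nonneg (hr_nonneg η τ) (hp_nonneg η τ))
    (fun s => Finset.sum_nonneg fun η _ => Finset.sum_nonneg fun τ _ =>
      mul_nonneg (hr_nonneg η τ) (hq_nonneg η τ))
    (by simp [hwdef])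
    ?_ x hx
  · have h1 := habs x y hx hy
    have hq := hq_nonneg x y
    have := mul_le_mul_of_nonneg_left hgron hq
    calc |u x y| ≤ p x y + q x y * w x := h1
      _ ≤ _ := by rw [mul_assoc]; linarith
  · -- the step inequality
    intro z hz
    have hsplit : w (z + 1) = w z + ∑ η ∈ Finset.Ico x₀ z,
        ∑ τ ∈ Finset.Ico y₀ y, r η τ * |u η τ| := by
      simp only [hwdef]
      rw [Finset.sum_Ico_succ_top hz]
    rw [hsplit]
    have hv : ∑ η ∈ Finset.Ico x₀ z, ∑ τ ∈ Finset.Ico y₀ y, r η τ * |u η τ| ≤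
        (∑ η ∈ Finset.Ico x₀ z, ∑ τ ∈ Finset.Ico y₀ y, r η τ * p η τ) +
        (∑ η ∈ Finset.Ico x₀ z, ∑ τ ∈ Finset.Ico y₀ y, r η τ * q η τ) * w z := by
      have : ∀ η ∈ Finset.Ico x₀ z, ∀ τ ∈ Finset.Ico y₀ y,
          r η τ * |u η τ| ≤ r η τ * p η τ + (r η τ * q η τ) * w z := by
        intro η hη τ hτ
        obtain ⟨hη1, hη2⟩ := Finset.mem_Ico.mp hη
        obtain ⟨hτ1, hτ2⟩ := Finset.mem_Ico.mp hτ
        have hW : (∑ s ∈ Finset.Ico x₀ η, ∑ η' ∈ Finset.Ico x₀ s,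
            ∑ τ' ∈ Finset.Ico y₀ τ, r η' τ' * |u η' τ'|) ≤ w z := by
          have step1 : (∑ s ∈ Finset.Ico x₀ η, ∑ η' ∈ Finset.Ico x₀ s,
              ∑ τ' ∈ Finset.Ico y₀ τ, r η' τ' * |u η' τ'|) ≤ w η := by
            refine Finset.sum_le_sum fun s _ => Finset.sum_le_sum fun η' _ => ?_
            exact Finset.sum_le_sum_of_subset_of_nonneg
              (Finset.Ico_subset_Ico_right hτ2.le)
              (fun i _ _ => mul_nonneg (hr_nonneg η' i) (abs_nonneg _))
          exact step1.trans (hw_mono η z hη2.le)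
        have hu' := habs η τ hη1 hτ1
        have hr' := hr_nonneg η τ
        have hq' := hq_nonneg η τ
        nlinarith [mul_le_mul_of_nonneg_left hW (mul_nonneg hr' hq'),
          mul_le_mul_of_nonneg_left hu' hr']
      calc ∑ η ∈ Finset.Ico x₀ z, ∑ τ ∈ Finset.Ico y₀ y, r η τ * |u η τ|
          ≤ ∑ η ∈ Finset.Ico x₀ z, ∑ τ ∈ Finset.Ico y₀ y,
              (r η τ * p η τ + (r η τ * q η τ) * w z) :=
            Finset.sum_le_sum fun η hη => Finset.sum_le_sum fun τ hτ => this η hη τ hτ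
        _ = _ := by simp [Finset.sum_add_distrib, Finset.sum_mul]
    linarith
end
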